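/- Let t ↦ x̃_t be a C² curve in the de Sitter hyperboloid dS ⊂ ℝ⁵ with g̃(x̃_t, ẋ̃_t) = 0 and g̃(x̃_t, ã_t) = -1 for all t (where ã_t is the ambient acceleration), and let Λ_t solve dΛ_t/dt = M_t ∘ Λ_t, Λ₀ = id, with M_t(v) = g̃(ẋ̃_t, v)·ã_t - g̃(ã_t, v)·ẋ̃_t. Then g̃(x̃_t, Λ_t y) = g̃(x̃₀, y) for every y ∈ ℝ⁵ and all t. -/

import Mathlib

noncomputable def mink (x y : Fin 5 → ℝ) : ℝ :=
  x 0 * y 0 - x 1 * y 1 - x 2 * y 2 - x 3 * y 3 - x 4 * y 4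

lemma mink_sub_right (x y z : Fin 5 → ℝ) : mink x (y - z) = mink x y - mink x z := by
  simp only [mink, Pi.sub_apply]
  ring

lemma mink_smul_right (c : ℝ) (x y : Fin 5 → ℝ) : mink x (c • y) = c * mink x y := by
  simp only [mink, Pi.smul_apply, smul_eq_mul]
  ring

lemma HasDerivAt.mink {p q : ℝ → Fin 5 → ℝ} {p' q' : Fin 5 → ℝ} {t : ℝ}
    (hp : HasDerivAt p p' t) (hq : HasDerivAt q q' t) :
    HasDerivAt (fun s => mink (p s) (q s)) (mink p' (q t) + mink (p t) q') t := by
  have hpi : ∀ i, HasDerivAt (fun s => p s i) (p' i) t := fun i => hasDerivAt_pi.mp hp i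
  have hqi : ∀ i, HasDerivAt (fun s => q s i) (q' i) t := fun i => hasDerivAt_pi.mp hq i
  simp only [_root_.mink]
  exact ((((((hpi 0).mul (hqi 0)).sub ((hpi 1).mul (hqi 1))).sub
      ((hpi 2).mul (hqi 2))).sub ((hpi 3).mul (hqi 3))).sub ((hpi 4).mul (hqi 4))).congr_deriv
    (by ring)

/-- This is the cancellation `g̃(ẋ̃, w) + g̃(x̃, M w) = 0` that makes `g̃(x̃_t, Λ_t y)` constant. -/
lemma mink_add_mink_fermiWalker_eq_zero {x v a : Fin 5 → ℝ}
    (hxv : mink x v = 0) (hxa : mink x a = -1) (w : Fin 5 → ℝ) :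
    mink v w + mink x (mink v w • a - mink a w • v) = 0 := by
  rw [mink_sub_right, mink_smul_right, mink_smul_right, hxv, hxa]
  ring

theorem stmt_8_general (x v a : ℝ → (Fin 5 → ℝ))
    (hx : ∀ t, HasDerivAt x (v t) t)
    (hxv : ∀ t, mink (x t) (v t) = 0)
    (hxa : ∀ t, mink (x t) (a t) = -1)
    (M : ℝ → ((Fin 5 → ℝ) →L[ℝ] (Fin 5 → ℝ)))
    (hM : ∀ t w, M t w = mink (v t) w • a t - mink (a t) w • v t)
    (Λ : ℝ → ((Fin 5 → ℝ) →L[ℝ] (Fin 5 → ℝ)))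
    (hΛ : ∀ t, HasDerivAt Λ ((M t).comp (Λ t)) t)
    (hΛ0 : Λ 0 = ContinuousLinearMap.id ℝ (Fin 5 → ℝ)) :
    ∀ t (y : Fin 5 → ℝ), mink (x t) (Λ t y) = mink (x 0) y := by
  intro t y
  have hderiv : ∀ s, HasDerivAt (fun s => mink (x s) (Λ s y)) 0 s := by
    intro s
    have hΛy : HasDerivAt (fun s => Λ s y) (M s (Λ s y)) s := by
      simpa using (hΛ s).clm_apply (hasDerivAt_const s y)
    simpa only [hM, mink_add_mink_fermiWalker_eq_zero (hxv s) (hxa s)] using (hx s).mink hΛy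
  rw [is_const_of_deriv_eq_zero (fun s => (hderiv s).differentiableAt)
    (fun s => (hderiv s).deriv) t 0, hΛ0]
  rfl

/-- Along a de Sitter worldline `x̃_t` (with velocity `v` and ambient
acceleration `a` satisfying `g̃(x̃,ẋ̃) = 0`, `g̃(x̃,ã) = -1`), the solution of
the Fermi--Walker ODE `dΛ/dt = M_t ∘ Λ_t`, `Λ₀ = id`, with
`M_t = g̃(ẋ̃_t,·)ã_t - g̃(ã_t,·)ẋ̃_t`, satisfies
`g̃(x̃_t, Λ_t y) = g̃(x̃₀, y)` for all `y` and `t`. -/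
theorem stmt_8 (x v a : ℝ → (Fin 5 → ℝ))
    (hdS : ∀ t, mink (x t) (x t) = -1)
    (hx : ∀ t, HasDerivAt x (v t) t)
    (hxv : ∀ t, mink (x t) (v t) = 0)
    (hxa : ∀ t, mink (x t) (a t) = -1)
    (M : ℝ → ((Fin 5 → ℝ) →L[ℝ] (Fin 5 → ℝ)))
    (hM : ∀ t w, M t w = mink (v t) w • a t - mink (a t) w • v t)
    (Λ : ℝ → ((Fin 5 → ℝ) →L[ℝ] (Fin 5 → ℝ)))
    (hΛ : ∀ t, HasDerivAt Λ ((M t).comp (Λ t)) t)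
    (hΛ0 : Λ 0 = ContinuousLinearMap.id ℝ (Fin 5 → ℝ)) :
    ∀ t (y : Fin 5 → ℝ), mink (x t) (Λ t y) = mink (x 0) y :=
  stmt_8_general x v a hx hxv hxa M hM Λ hΛ hΛ0
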